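/- Let f : ℝⁿ × ℝⁿ → ℂ be a Schwartz function. Then the integral over x ∈ ℝⁿ of ((Δ_{x₁} - Δ_{x₂}) f)(x, x) dx equals zero, where Δ_{x₁} is the Laplacian in the first n variables and Δ_{x₂} is the Laplacian in the second n variables. -/

import Mathlib

/-! By symmetry of the Hessian, `∂²f/∂(x₁)ᵢ² - ∂²f/∂(x₂)ᵢ²` at a diagonal point `(x, x)` is
the derivative in the direction `eᵢ` of `x ↦ (∂_{(eᵢ, -eᵢ)} f)(x, x)`. This restriction to the
diagonal is again a Schwartz function, and the integral over `ℝⁿ` of a derivative of a Schwartz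
function vanishes (integrate by parts against the constant `1`). -/

open MeasureTheory

/-- The Laplacian in the first group of `n` variables, `Δ_{x₁} f`, of a function
`f : ℝⁿ × ℝⁿ → ℂ`. -/
noncomputable def lapFst (n : ℕ) (f : ((Fin n → ℝ) × (Fin n → ℝ)) → ℂ)
    (p : (Fin n → ℝ) × (Fin n → ℝ)) : ℂ :=
  ∑ i : Fin n,
    fderiv ℝ (fun q => fderiv ℝ f q ((Pi.single i 1 : Fin n → ℝ), 0)) p
      ((Pi.single i 1 : Fin n → ℝ), 0)

/-- The Laplacian in the second group of `n` variables, `Δ_{x₂} f`. -/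
noncomputable def lapSnd (n : ℕ) (f : ((Fin n → ℝ) × (Fin n → ℝ)) → ℂ)
    (p : (Fin n → ℝ) × (Fin n → ℝ)) : ℂ :=
  ∑ i : Fin n,
    fderiv ℝ (fun q => fderiv ℝ f q (0, (Pi.single i 1 : Fin n → ℝ))) p
      (0, (Pi.single i 1 : Fin n → ℝ))

open scoped LineDeriv

section SecondDerivative

variable {E F : Type*} [NormedAddCommGroup E] [NormedSpace ℝ E]
  [NormedAddCommGroup F] [NormedSpace ℝ F]

theorem fderiv_fderiv_apply_const {f : E → F} {x : E}
    (hf : DifferentiableAt ℝ (fderiv ℝ f) x) (v w : E) :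
    fderiv ℝ (fun y => fderiv ℝ f y v) x w = fderiv ℝ (fderiv ℝ f) x w v := by
  rw [fderiv_clm_apply hf (differentiableAt_const v)]
  simp

theorem fderiv_comp_diag_apply {g : E × E → F} {x : E} (hg : DifferentiableAt ℝ g (x, x))
    (u : E) : fderiv ℝ (fun y => g (y, y)) x u = fderiv ℝ g (x, x) (u, u) := by
  have hcomp : HasFDerivAt (fun y => g (y, y))
      ((fderiv ℝ g (x, x)).comp ((ContinuousLinearMap.id ℝ E).prod (.id ℝ E))) x :=
    hg.hasFDerivAt.comp (f := fun y => (y, y)) x ((hasFDerivAt_id x).prodMk (hasFDerivAt_id x))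
  rw [hcomp.fderiv]
  rfl

theorem fderiv_fderiv_comp_diag_apply {f : E × E → F} (hf : ContDiff ℝ 2 f) (x u : E) :
    fderiv ℝ (fun y => fderiv ℝ f (y, y) (u, -u)) x u =
      fderiv ℝ (fun q => fderiv ℝ f q (u, 0)) (x, x) (u, 0)
        - fderiv ℝ (fun q => fderiv ℝ f q (0, u)) (x, x) (0, u) := by
  have hf' : Differentiable ℝ (fderiv ℝ f) :=
    (hf.fderiv_right (m := 1) (by norm_num)).differentiable (by norm_num)
  have hsymm := (hf.contDiffAt (x := (x, x))).isSymmSndFDerivAt (by simp)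
  rw [fderiv_comp_diag_apply (g := fun q => fderiv ℝ f q (u, -u)) (by fun_prop),
    fderiv_fderiv_apply_const (hf' _), fderiv_fderiv_apply_const (hf' _),
    fderiv_fderiv_apply_const (hf' _)]
  have hsplit : ((u, u) : E × E) = (u, 0) + (0, u) := by simp
  have hsplit' : ((u, -u) : E × E) = (u, 0) - (0, u) := by simp
  simp only [hsplit, hsplit', map_add, map_sub, add_apply, hsymm (u, 0) (0, u)]
  abel

end SecondDerivative

namespace SchwartzMap

variable {E F : Type*} [NormedAddCommGroup E] [NormedSpace ℝ E]
  [NormedAddCommGroup F] [NormedSpace ℝ F]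

noncomputable def compDiag : 𝓢(E × E, F) →L[ℝ] 𝓢(E, F) :=
  compCLMOfAntilipschitz ℝ
    ((ContinuousLinearMap.id ℝ E).prod (ContinuousLinearMap.id ℝ E)).hasTemperateGrowth
    (Isometry.antilipschitz fun _ _ => by simp [Prod.edist_eq])

variable [FiniteDimensional ℝ E] [MeasurableSpace E] [BorelSpace E] {μ : Measure E}
  [μ.IsAddHaarMeasure]

theorem integrable_fderiv_apply (g : 𝓢(E, F)) (v : E) :
    Integrable (fun x => fderiv ℝ g x v) μ :=
  (∂_{v} g).integrable.congr (.of_forall (lineDerivOp_apply_eq_fderiv v g))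

theorem integral_fderiv_apply_eq_zero (g : 𝓢(E, F)) (v : E) :
    ∫ x, fderiv ℝ g x v ∂μ = 0 := by
  have := integral_smul_fderiv_eq_neg_fderiv_smul_of_integrable (μ := μ) (𝕜 := ℝ)
    (f := fun _ => (1 : ℝ)) (g := g) (v := v) (by simp)
    (by simpa using integrable_fderiv_apply g v) (by simpa using g.integrable)
    (fun _ _ => differentiableAt_const _) (fun _ _ => g.differentiableAt)
  simpa using this

end SchwartzMap

open SchwartzMap

/-- For a Schwartz function `f : ℝⁿ × ℝⁿ → ℂ`, the integral of
`((Δ_{x₁} - Δ_{x₂}) f)(x, x)` over `x ∈ ℝⁿ` vanishes. -/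
theorem stmt_0 (n : ℕ) (f : SchwartzMap ((Fin n → ℝ) × (Fin n → ℝ)) ℂ) :
    ∫ x : Fin n → ℝ, (lapFst n f (x, x) - lapSnd n f (x, x)) = 0 := by
  set e : Fin n → Fin n → ℝ := fun i => Pi.single i 1
  set g : Fin n → 𝓢(Fin n → ℝ, ℂ) := fun i => compDiag (∂_{(e i, -e i)} f)
  have hg : ∀ x, lapFst n f (x, x) - lapSnd n f (x, x) = ∑ i, fderiv ℝ (g i) x (e i) := by
    intro x
    simp only [lapFst, lapSnd, ← Finset.sum_sub_distrib,
      ← fderiv_fderiv_comp_diag_apply (f.smooth 2)]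
    congr!
  simp_rw [hg]
  rw [integral_finsetSum _ fun i _ => integrable_fderiv_apply (g i) (e i)]
  simp [integral_fderiv_apply_eq_zero]
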